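/- arXiv:2303.02024 — 5 statements merged into one kernel-verified Lean document; each statement's English description precedes it below -/
import Mathlib

section
/- Let ε_d ≥ 0 and let U₀, U₁, …, U_K : 𝒳 → ℝ be a sequence of functions such that U₀(x) ≤ V(x) for all x ∈ 𝒳 and, for each 1 ≤ k ≤ K, U_k(x) = max{ U_{k−1}(x), ℓ_k(x) } for all x ∈ 𝒳, where ℓ_k : 𝒳 → ℝ satisfies ℓ_k(x) ≤ (1/N)·∑_{i=1}^{N} inf_{y ∈ Xᵢ(x)} ( hᵢ(y) + λ·U_{k−1}(y) ) + ε_d for all x ∈ 𝒳. Then for every 1 ≤ k ≤ K and x ∈ 𝒳: U_{k−1}(x) ≤ U_k(x) and U_k(x) ≤ V(x) + ((1 − λᵏ)/(1 − λ))·ε_d. In particular, when ε_d = 0 every U_k underestimates V on 𝒳. -/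
open scoped BigOperators

/-- Monotonicity and bounded overestimation of the inexact
cutting-plane models.  `U_k = max(U_{k-1}, ℓ_k)` where the cut `ℓ_k` is below
the one-step Bellman update of `U_{k-1}` plus an error `ε_d`; then the models
are nondecreasing and `U_k ≤ V + ((1-λᵏ)/(1-λ))·ε_d` on `𝒳`. -/
theorem inexact_cutting_plane_model_bounds
    {n N : ℕ} (hn : 1 ≤ n) (hN : 1 ≤ N)
    (𝒳 : Set (EuclideanSpace ℝ (Fin n))) (h𝒳 : 𝒳.Nonempty)
    (lam : ℝ) (hlam0 : 0 < lam) (hlam1 : lam < 1)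
    (𝒳i : Fin N → Set (EuclideanSpace ℝ (Fin n)))
    (h𝒳i : ∀ i, 𝒳i i ⊆ 𝒳)
    (h : Fin N → EuclideanSpace ℝ (Fin n) → ℝ)
    (hbdd : ∀ i, ∃ mh Mh : ℝ, ∀ x ∈ 𝒳, mh ≤ h i x ∧ h i x ≤ Mh)
    (X : Fin N → EuclideanSpace ℝ (Fin n) → Set (EuclideanSpace ℝ (Fin n)))
    (hX : ∀ i, ∀ x ∈ 𝒳, (X i x).Nonempty ∧ X i x ⊆ 𝒳i i)
    (V : EuclideanSpace ℝ (Fin n) → ℝ)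
    (hVbdd : ∃ mV MV : ℝ, ∀ x ∈ 𝒳, mV ≤ V x ∧ V x ≤ MV)
    (hBellman : ∀ x ∈ 𝒳, (V x : EReal)
      = ((1 / (N : ℝ) : ℝ) : EReal) *
          ∑ i : Fin N, ⨅ y ∈ X i x, ((h i y + lam * V y : ℝ) : EReal))
    (εd : ℝ) (hεd : 0 ≤ εd) (K : ℕ)
    (U : ℕ → EuclideanSpace ℝ (Fin n) → ℝ)
    (ℓ : ℕ → EuclideanSpace ℝ (Fin n) → ℝ)
    (hU0 : ∀ x ∈ 𝒳, U 0 x ≤ V x)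
    (hUrec : ∀ k, 1 ≤ k → k ≤ K → ∀ x ∈ 𝒳, U k x = max (U (k - 1) x) (ℓ k x))
    (hcut : ∀ k, 1 ≤ k → k ≤ K → ∀ x ∈ 𝒳,
      ((ℓ k x : ℝ) : EReal)
        ≤ ((1 / (N : ℝ) : ℝ) : EReal) *
            ∑ i : Fin N, ⨅ y ∈ X i x, ((h i y + lam * U (k - 1) y : ℝ) : EReal)
          + ((εd : ℝ) : EReal)) :
    ∀ k, 1 ≤ k → k ≤ K → ∀ x ∈ 𝒳,
      U (k - 1) x ≤ U k x ∧ U k x ≤ V x + ((1 - lam ^ k) / (1 - lam)) * εd := by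

  obtain ⟨mV, MV, hV⟩ := hVbdd
  have hlamne : (1:ℝ) - lam ≠ 0 := by linarith
  have coe_sum : ∀ (b : Fin N → ℝ),
      ((∑ i, b i : ℝ) : EReal) = ∑ i, ((b i : ℝ) : EReal) := fun b =>
    map_sum (⟨⟨Real.toEReal, EReal.coe_zero⟩, EReal.coe_add⟩ : ℝ →+ EReal) b Finset.univ
  have hNpos : (0:ℝ) < (N:ℝ) := by exact_mod_cast Nat.lt_of_lt_of_le Nat.zero_lt_one hN
  have key : ∀ k, k ≤ K → ∀ x ∈ 𝒳,
      U k x ≤ V x + ((1 - lam ^ k) / (1 - lam)) * εd := by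
    intro k
    induction k with
    | zero => intro _ x hx; simpa using hU0 x hx
    | succ k ih =>
      intro hkK x hx
      have hk : k ≤ K := Nat.le_of_succ_le hkK
      have ihx := ih hk
      set c : ℝ := (1 - lam ^ k) / (1 - lam) with hc
      set d : ℝ := lam * (c * εd) with hd
      have hpow : (0:ℝ) ≤ lam ^ k := pow_nonneg hlam0.le k
      have hcsucc : (1 - lam ^ (k+1)) / (1 - lam) * εd = d + εd := by
        rw [hd, hc, pow_succ]
        field_simp
        ring
      have hrec := hUrec (k+1) (by omega) hkK x hx
      simp only [Nat.add_sub_cancel] at hrec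
      rw [hrec]
      apply max_le
      · have h1 := ihx x hx
        have h2 : d + εd - c * εd = lam ^ k * εd := by
          rw [hd, hc]; field_simp; ring
        have h3 : (0:ℝ) ≤ lam ^ k * εd := mul_nonneg hpow hεd
        rw [hcsucc]
        linarith
      · have hcutx := hcut (k+1) (by omega) hkK x hx
        simp only [Nat.add_sub_cancel, ← EReal.coe_add] at hcutx
        have hBfin : ∀ i : Fin N, ∃ b : ℝ,
            (⨅ y ∈ X i x, ((h i y + lam * V y : ℝ) : EReal)) = (b : EReal) := by
          intro i
          obtain ⟨mh, Mh, hmh⟩ := hbdd i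
          obtain ⟨⟨y0, hy0⟩, hsub⟩ := hX i x hx
          have hne_top : (⨅ y ∈ X i x, ((h i y + lam * V y : ℝ) : EReal)) ≠ ⊤ :=
            ne_top_of_le_ne_top (EReal.coe_ne_top _) (iInf₂_le y0 hy0)
          have hlb : ((mh + lam * mV : ℝ) : EReal)
              ≤ ⨅ y ∈ X i x, ((h i y + lam * V y : ℝ) : EReal) := by
            refine le_iInf₂ fun y hy => ?_
            have hyX : y ∈ 𝒳 := h𝒳i i (hsub hy)
            have hm := hmh y hyX
            have hv := hV y hyX
            have : mh + lam * mV ≤ h i y + lam * V y := by nlinarith [hlam0.le]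
            exact_mod_cast this
          have hne_bot : (⨅ y ∈ X i x, ((h i y + lam * V y : ℝ) : EReal)) ≠ ⊥ := by
            intro hb
            rw [hb] at hlb
            exact (EReal.coe_ne_bot _) (le_bot_iff.1 hlb)
          exact ⟨_, (EReal.coe_toReal hne_top hne_bot).symm⟩
        choose b hb using hBfin
        have hA : ∀ i : Fin N,
            (⨅ y ∈ X i x, ((h i y + lam * U k y + εd : ℝ) : EReal))
              ≤ ((b i + d + εd : ℝ) : EReal) := by
          intro i
          by_contra hcon
          push_neg at hcon
          obtain ⟨r, hr1, hr2⟩ := EReal.exists_between_coe_real hcon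
          have hr1' : b i + d + εd < r := by exact_mod_cast hr1
          have hBlt : (⨅ y ∈ X i x, ((h i y + lam * V y : ℝ) : EReal))
              < ((r - d - εd : ℝ) : EReal) := by
            rw [hb i]
            exact_mod_cast (by linarith : b i < r - d - εd)
          simp only [iInf_lt_iff] at hBlt
          obtain ⟨y, hyXi, hylt⟩ := hBlt
          have hyX : y ∈ 𝒳 := h𝒳i i ((hX i x hx).2 hyXi)
          have hUy : U k y ≤ V y + c * εd := ihx y hyX
          have hylt' : h i y + lam * V y < r - d - εd := by exact_mod_cast hylt
          have h1 : h i y + lam * U k y + εd < r := by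
            have h5 := mul_le_mul_of_nonneg_left hUy hlam0.le
            have h6 : lam * (V y + c * εd) = lam * V y + d := by rw [hd]; ring
            linarith
          have h2 : (⨅ y ∈ X i x, ((h i y + lam * U k y + εd : ℝ) : EReal))
              ≤ ((h i y + lam * U k y + εd : ℝ) : EReal) := iInf₂_le y hyXi
          have h3 : (⨅ y ∈ X i x, ((h i y + lam * U k y + εd : ℝ) : EReal)) < (r : EReal) :=
            lt_of_le_of_lt h2 (by exact_mod_cast h1)
          exact absurd hr2 (not_lt.2 h3.le)
        have hsum : (∑ i : Fin N, ⨅ y ∈ X i x, ((h i y + lam * U k y + εd : ℝ) : EReal))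
            ≤ ((∑ i : Fin N, (b i + d + εd) : ℝ) : EReal) := by
          rw [coe_sum]
          exact Finset.sum_le_sum fun i _ => hA i
        have hmulle : ((1 / (N : ℝ) : ℝ) : EReal) *
              (∑ i : Fin N, ⨅ y ∈ X i x, ((h i y + lam * U k y + εd : ℝ) : EReal))
            ≤ ((1 / (N : ℝ) * ∑ i : Fin N, (b i + d + εd) : ℝ) : EReal) := by
          rw [EReal.coe_mul]
          refine mul_le_mul_of_nonneg_left hsum ?_
          exact_mod_cast le_of_lt (by positivity : (0:ℝ) < 1 / (N:ℝ))
        have hfinal : ((ℓ (k+1) x : ℝ) : EReal)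
            ≤ ((1 / (N : ℝ) * ∑ i : Fin N, (b i + d + εd) : ℝ) : EReal) :=
          hcutx.trans hmulle
        have hreal : ℓ (k+1) x ≤ 1 / (N : ℝ) * ∑ i : Fin N, (b i + d + εd) := by
          exact_mod_cast hfinal
        have hVx : V x = 1 / (N : ℝ) * ∑ i : Fin N, b i := by
          have := hBellman x hx
          simp only [hb] at this
          rw [← coe_sum, ← EReal.coe_mul] at this
          exact_mod_cast this
        have hsplit : (∑ i : Fin N, (b i + d + εd))
            = (∑ i : Fin N, b i) + (N : ℝ) * (d + εd) := by
          have : ∀ i : Fin N, b i + d + εd = b i + (d + εd) := fun i => by ring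
          simp only [this]
          rw [Finset.sum_add_distrib, Finset.sum_const, Finset.card_univ, Fintype.card_fin,
            nsmul_eq_mul]
        rw [hcsucc]
        rw [hsplit] at hreal
        have hNd : 1 / (N : ℝ) * ((∑ i : Fin N, b i) + (N : ℝ) * (d + εd))
            = 1 / (N : ℝ) * (∑ i : Fin N, b i) + (d + εd) := by
          field_simp
        rw [hNd] at hreal
        linarith [hreal, hVx.symm.le]
  intro k hk1 hkK x hx
  constructor
  · rw [hUrec k hk1 hkK x hx]
    exact le_max_left _ _
  · exact key k hkK x hx
end

section
/- Let U : 𝒳 → ℝ satisfy U(y) ≤ V(y) for all y ∈ 𝒳. Fix x ∈ 𝒳 and suppose for each i ∈ {1,…,N} that xᵢ ∈ Xᵢ(x) is a minimizer of y ↦ hᵢ(y) + λ·U(y) over Xᵢ(x), i.e., hᵢ(xᵢ) + λ·U(xᵢ) ≤ hᵢ(y) + λ·U(y) for all y ∈ Xᵢ(x). Then 0 ≤ V(x) − (1/N)·∑_{i=1}^{N} ( hᵢ(xᵢ) + λ·U(xᵢ) ) ≤ (λ/N)·∑_{i=1}^{N} ( V(xᵢ) − U(xᵢ) ). -/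
open scoped BigOperators

/-- Saturation propagation with exact subproblem solutions.  If
`U ≤ V` on `𝒳` and each `xᵢ` minimizes `hᵢ + λ·U` over `Xᵢ(x)`, then
`0 ≤ V(x) - (1/N)∑ᵢ(hᵢ(xᵢ)+λU(xᵢ)) ≤ (λ/N)∑ᵢ(V(xᵢ)-U(xᵢ))`. -/
theorem saturation_propagation_exact
    {n N : ℕ} (hn : 1 ≤ n) (hN : 1 ≤ N)
    (𝒳 : Set (EuclideanSpace ℝ (Fin n))) (h𝒳 : 𝒳.Nonempty)
    (lam : ℝ) (hlam0 : 0 < lam) (hlam1 : lam < 1)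
    (𝒳i : Fin N → Set (EuclideanSpace ℝ (Fin n)))
    (h𝒳i : ∀ i, 𝒳i i ⊆ 𝒳)
    (h : Fin N → EuclideanSpace ℝ (Fin n) → ℝ)
    (hbdd : ∀ i, ∃ mh Mh : ℝ, ∀ x ∈ 𝒳, mh ≤ h i x ∧ h i x ≤ Mh)
    (X : Fin N → EuclideanSpace ℝ (Fin n) → Set (EuclideanSpace ℝ (Fin n)))
    (hX : ∀ i, ∀ x ∈ 𝒳, (X i x).Nonempty ∧ X i x ⊆ 𝒳i i)
    (V : EuclideanSpace ℝ (Fin n) → ℝ)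
    (hVbdd : ∃ mV MV : ℝ, ∀ x ∈ 𝒳, mV ≤ V x ∧ V x ≤ MV)
    (hBellman : ∀ x ∈ 𝒳, V x
      = (1 / (N : ℝ)) * ∑ i : Fin N, sInf ((fun y => h i y + lam * V y) '' X i x))
    (U : EuclideanSpace ℝ (Fin n) → ℝ)
    (hU : ∀ y ∈ 𝒳, U y ≤ V y)
    (x : EuclideanSpace ℝ (Fin n)) (hx : x ∈ 𝒳)
    (xi : Fin N → EuclideanSpace ℝ (Fin n))
    (hxi : ∀ i, xi i ∈ X i x)
    (hmin : ∀ i, ∀ y ∈ X i x, h i (xi i) + lam * U (xi i) ≤ h i y + lam * U y) :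
    0 ≤ V x - (1 / (N : ℝ)) * ∑ i : Fin N, (h i (xi i) + lam * U (xi i)) ∧
      V x - (1 / (N : ℝ)) * ∑ i : Fin N, (h i (xi i) + lam * U (xi i))
        ≤ (lam / (N : ℝ)) * ∑ i : Fin N, (V (xi i) - U (xi i)) := by

  have hNpos : (0:ℝ) < (N:ℝ) := by exact_mod_cast hN
  have hmem : ∀ i, ∀ y ∈ X i x, y ∈ 𝒳 := fun i y hy =>
    h𝒳i i ((hX i x hx).2 hy)
  have hlb : ∀ i, ∀ z ∈ (fun y => h i y + lam * V y) '' X i x,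
      h i (xi i) + lam * U (xi i) ≤ z := by
    rintro i z ⟨y, hy, rfl⟩
    calc h i (xi i) + lam * U (xi i) ≤ h i y + lam * U y := hmin i y hy
      _ ≤ h i y + lam * V y := by
          have := hU y (hmem i y hy)
          nlinarith
  have hle1 : ∀ i, h i (xi i) + lam * U (xi i)
      ≤ sInf ((fun y => h i y + lam * V y) '' X i x) := fun i =>
    le_csInf ⟨_, ⟨xi i, hxi i, rfl⟩⟩ (hlb i)
  have hle2 : ∀ i, sInf ((fun y => h i y + lam * V y) '' X i x)
      ≤ h i (xi i) + lam * V (xi i) := fun i =>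
    csInf_le ⟨_, hlb i⟩ ⟨xi i, hxi i, rfl⟩
  rw [hBellman x hx]
  constructor
  · have := Finset.sum_le_sum (s := Finset.univ) (fun i _ => hle1 i)
    have h1 : (1 / (N : ℝ)) * ∑ i : Fin N, (h i (xi i) + lam * U (xi i))
        ≤ (1 / (N : ℝ)) * ∑ i : Fin N, sInf ((fun y => h i y + lam * V y) '' X i x) := by
      apply mul_le_mul_of_nonneg_left this
      positivity
    linarith
  · have hsum : ∑ i : Fin N, sInf ((fun y => h i y + lam * V y) '' X i x)
        ≤ ∑ i : Fin N, (h i (xi i) + lam * V (xi i)) :=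
      Finset.sum_le_sum (fun i _ => hle2 i)
    have h1 : (1 / (N : ℝ)) * ∑ i : Fin N, sInf ((fun y => h i y + lam * V y) '' X i x)
        ≤ (1 / (N : ℝ)) * ∑ i : Fin N, (h i (xi i) + lam * V (xi i)) := by
      apply mul_le_mul_of_nonneg_left hsum
      positivity
    have h2 : (1 / (N : ℝ)) * ∑ i : Fin N, (h i (xi i) + lam * V (xi i))
        - (1 / (N : ℝ)) * ∑ i : Fin N, (h i (xi i) + lam * U (xi i))
        = (lam / (N : ℝ)) * ∑ i : Fin N, (V (xi i) - U (xi i)) := by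
      rw [← mul_sub, ← Finset.sum_sub_distrib, Finset.mul_sum, Finset.mul_sum]
      exact Finset.sum_congr rfl fun i _ => by ring
    linarith
end

section
/- Let U : 𝒳 → ℝ be any function and let ε_p ≥ 0, ε_c ≥ 0, M_D ≥ 0. Fix x ∈ 𝒳 and suppose for each i ∈ {1,…,N} there are a set X̃ᵢ ⊆ 𝒳 (a perturbed feasible set) and a point x̄ᵢ ∈ X̃ᵢ such that: (i) inf_{y ∈ Xᵢ(x)} ( hᵢ(y) + λ·V(y) ) ≤ inf_{y ∈ X̃ᵢ} ( hᵢ(y) + λ·V(y) ) + M_D·ε_c, and (ii) hᵢ(x̄ᵢ) + λ·U(x̄ᵢ) ≤ inf_{y ∈ Xᵢ(x)} ( hᵢ(y) + λ·U(y) ) + ε_p. Then V(x) − (1/N)·∑_{i=1}^{N} inf_{y ∈ Xᵢ(x)} ( hᵢ(y) + λ·U(y) ) ≤ (λ/N)·∑_{i=1}^{N} ( V(x̄ᵢ) − U(x̄ᵢ) ) + ε_p + M_D·ε_c. -/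
open scoped BigOperators

/-- Saturation propagation with `(ε_p, ·, ε_c)`-approximate
subproblem solutions.  Hypothesis (i) is the `M_D`-Lipschitz dependence of the
value on the `ε_c`-bounded feasibility perturbation (`X̃ᵢ` is the perturbed
feasible set) and (ii) says `x̄ᵢ` is an `ε_p`-approximate minimizer of
`hᵢ + λ·U` over `Xᵢ(x)`.  Infima involving the arbitrary function `U` are
taken in the extended reals. -/
theorem saturation_propagation_inexact
    {n N : ℕ} (hn : 1 ≤ n) (hN : 1 ≤ N)
    (𝒳 : Set (EuclideanSpace ℝ (Fin n))) (h𝒳 : 𝒳.Nonempty)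
    (lam : ℝ) (hlam0 : 0 < lam) (hlam1 : lam < 1)
    (𝒳i : Fin N → Set (EuclideanSpace ℝ (Fin n)))
    (h𝒳i : ∀ i, 𝒳i i ⊆ 𝒳)
    (h : Fin N → EuclideanSpace ℝ (Fin n) → ℝ)
    (hbdd : ∀ i, ∃ mh Mh : ℝ, ∀ x ∈ 𝒳, mh ≤ h i x ∧ h i x ≤ Mh)
    (X : Fin N → EuclideanSpace ℝ (Fin n) → Set (EuclideanSpace ℝ (Fin n)))
    (hX : ∀ i, ∀ x ∈ 𝒳, (X i x).Nonempty ∧ X i x ⊆ 𝒳i i)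
    (V : EuclideanSpace ℝ (Fin n) → ℝ)
    (hVbdd : ∃ mV MV : ℝ, ∀ x ∈ 𝒳, mV ≤ V x ∧ V x ≤ MV)
    (hBellman : ∀ x ∈ 𝒳, V x
      = (1 / (N : ℝ)) * ∑ i : Fin N, sInf ((fun y => h i y + lam * V y) '' X i x))
    (U : EuclideanSpace ℝ (Fin n) → ℝ)
    (εp εc MD : ℝ) (hεp : 0 ≤ εp) (hεc : 0 ≤ εc) (hMD : 0 ≤ MD)
    (x : EuclideanSpace ℝ (Fin n)) (hx : x ∈ 𝒳)
    (Xt : Fin N → Set (EuclideanSpace ℝ (Fin n)))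
    (hXt : ∀ i, Xt i ⊆ 𝒳)
    (xb : Fin N → EuclideanSpace ℝ (Fin n))
    (hxb : ∀ i, xb i ∈ Xt i)
    -- (i): Lipschitz dependence of the value on the feasibility perturbation
    (hpert : ∀ i, sInf ((fun y => h i y + lam * V y) '' X i x)
      ≤ sInf ((fun y => h i y + lam * V y) '' Xt i) + MD * εc)
    -- (ii): `x̄ᵢ` is an `ε_p`-approximate minimizer of `hᵢ + λ·U` over `Xᵢ(x)`
    (happrox : ∀ i, ((h i (xb i) + lam * U (xb i) : ℝ) : EReal)
      ≤ (⨅ y ∈ X i x, ((h i y + lam * U y : ℝ) : EReal)) + ((εp : ℝ) : EReal)) :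
    ((V x : ℝ) : EReal)
        - ((1 / (N : ℝ) : ℝ) : EReal) *
            ∑ i : Fin N, ⨅ y ∈ X i x, ((h i y + lam * U y : ℝ) : EReal)
      ≤ (((lam / (N : ℝ)) * ∑ i : Fin N, (V (xb i) - U (xb i))
          + εp + MD * εc : ℝ) : EReal) := by
  classical
  have hNpos : (0:ℝ) < N := by exact_mod_cast hN
  -- Each EReal infimum is a finite real number
  have key : ∀ i : Fin N, ∃ I : ℝ,
      (⨅ y ∈ X i x, ((h i y + lam * U y : ℝ) : EReal)) = (I : EReal) ∧
      h i (xb i) + lam * U (xb i) ≤ I + εp := by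
    intro i
    set J : EReal := ⨅ y ∈ X i x, ((h i y + lam * U y : ℝ) : EReal) with hJ
    obtain ⟨y0, hy0⟩ := (hX i x hx).1
    have hle : J ≤ ((h i y0 + lam * U y0 : ℝ) : EReal) := iInf₂_le y0 hy0
    have hJtop : J ≠ ⊤ := ne_top_of_le_ne_top (EReal.coe_ne_top _) hle
    have hJbot : J ≠ ⊥ := by
      intro hb
      have := happrox i
      rw [← hJ, hb, EReal.bot_add] at this
      exact (EReal.bot_lt_coe _).not_ge this
    refine ⟨J.toReal, (EReal.coe_toReal hJtop hJbot).symm, ?_⟩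
    have := happrox i
    rw [← hJ, ← EReal.coe_toReal hJtop hJbot, ← EReal.coe_add] at this
    exact_mod_cast this
  choose I hIeq hIle using key
  -- Bound each sInf term
  obtain ⟨mV, MV, hV⟩ := hVbdd
  have hterm : ∀ i : Fin N, sInf ((fun y => h i y + lam * V y) '' X i x)
      ≤ I i + εp + lam * (V (xb i) - U (xb i)) + MD * εc := by
    intro i
    obtain ⟨mh, Mh, hh⟩ := hbdd i
    have hbdd' : BddBelow ((fun y => h i y + lam * V y) '' Xt i) := by
      refine ⟨mh + lam * mV, ?_⟩
      rintro _ ⟨y, hy, rfl⟩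
      have hy𝒳 := hXt i hy
      have h1 := (hh y hy𝒳).1
      have h2 := (hV y hy𝒳).1
      show mh + lam * mV ≤ h i y + lam * V y
      nlinarith
    have h1 : sInf ((fun y => h i y + lam * V y) '' Xt i)
        ≤ h i (xb i) + lam * V (xb i) :=
      csInf_le hbdd' ⟨xb i, hxb i, rfl⟩
    have h2 := hpert i
    have h3 := hIle i
    nlinarith
  -- Real-valued conclusion
  have hVx : V x ≤ (1 / (N : ℝ)) * ∑ i : Fin N, I i
      + (lam / N) * ∑ i : Fin N, (V (xb i) - U (xb i)) + εp + MD * εc := by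
    rw [hBellman x hx]
    have hsum : ∑ i : Fin N, sInf ((fun y => h i y + lam * V y) '' X i x)
        ≤ ∑ i : Fin N, (I i + εp + lam * (V (xb i) - U (xb i)) + MD * εc) :=
      Finset.sum_le_sum fun i _ => hterm i
    have hN' : (N : ℝ) ≠ 0 := ne_of_gt hNpos
    have := mul_le_mul_of_nonneg_left hsum (le_of_lt (by positivity : (0:ℝ) < 1 / N))
    calc (1 / (N : ℝ)) * ∑ i : Fin N, sInf ((fun y => h i y + lam * V y) '' X i x)
        ≤ (1 / (N : ℝ)) * ∑ i : Fin N,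
            (I i + εp + lam * (V (xb i) - U (xb i)) + MD * εc) := this
      _ = (1 / (N : ℝ)) * ∑ i : Fin N, I i
          + (lam / N) * ∑ i : Fin N, (V (xb i) - U (xb i)) + εp + MD * εc := by
          have e1 : ∑ i : Fin N, (I i + εp + lam * (V (xb i) - U (xb i)) + MD * εc)
              = ∑ i : Fin N, I i + N * εp
                + lam * ∑ i : Fin N, (V (xb i) - U (xb i)) + N * (MD * εc) := by
            rw [Finset.sum_add_distrib, Finset.sum_add_distrib, Finset.sum_add_distrib,
              Finset.sum_const, Finset.card_fin, nsmul_eq_mul, ← Finset.mul_sum,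
              Finset.sum_const, Finset.card_fin, nsmul_eq_mul]
          rw [e1]
          set S := ∑ i : Fin N, I i with hS
          set T := ∑ i : Fin N, (V (xb i) - U (xb i)) with hT
          field_simp
          ring
  -- Transfer to EReal
  have hsumE : (∑ i : Fin N, ⨅ y ∈ X i x, ((h i y + lam * U y : ℝ) : EReal))
      = ((∑ i : Fin N, I i : ℝ) : EReal) := by
    rw [Finset.sum_congr rfl fun i _ => hIeq i]
    exact_mod_cast
      (map_sum (⟨⟨Real.toEReal, EReal.coe_zero⟩, EReal.coe_add⟩ : ℝ →+ EReal) I Finset.univ).symm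
  rw [hsumE, ← EReal.coe_mul, ← EReal.coe_sub]
  exact_mod_cast by linarith
end

section
/- Let ψ : ℝⁿ → ℝ be a convex function with ψ(x) ≥ m for all x ∈ X̄, where X̄ ⊆ ℝⁿ is a convex set, let K ⊆ ℝᵐ be a convex cone, let A : ℝⁿ → ℝᵐ be a linear map, and let b ∈ ℝᵐ. For δ ∈ ℝᵐ define the perturbed feasible set X(δ) := { x ∈ X̄ : A x − b + δ ∈ K } and, when X(δ) ≠ ∅, the perturbed value g(δ) := inf_{x ∈ X(δ)} ψ(x). Let S ⊆ ℝᵐ be a convex set and ε' > 0 be such that X(δ') ≠ ∅ for every δ' with dist(δ', S) ≤ ε', and suppose g(δ') ≤ M for every such δ'. Then g is Lipschitz on S with constant (M − m)/ε'; that is, |g(δ) − g(δ')| ≤ ((M − m)/ε')·‖δ − δ'‖ for all δ, δ' ∈ S. -/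
/-!
The perturbed value is convex on the set of feasible perturbations, because a convex combination
of points feasible for `δ₁` and `δ₂` is feasible for the same combination of `δ₁` and `δ₂`.
A convex function bounded below by `m` on `S` and above by `M` on the `ε'`-neighbourhood of `S`
is `(M - m)/ε'`-Lipschitz on `S`: extend the segment from `δ` to `δ''` by `ε'` beyond `δ''` and
apply convexity to the three collinear points.
-/

open Metric Set Pointwise

lemma le_mul_csInf_add_mul_csInf {s t : Set ℝ} (hs : s.Nonempty) (hs' : BddBelow s)
    (ht : t.Nonempty) (ht' : BddBelow t) {a b c : ℝ} (ha : 0 ≤ a) (hb : 0 ≤ b)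
    (h : ∀ x ∈ s, ∀ y ∈ t, c ≤ a * x + b * y) : c ≤ a * sInf s + b * sInf t := by
  rw [← smul_eq_mul, ← smul_eq_mul b, ← Real.sInf_smul_of_nonneg ha,
    ← Real.sInf_smul_of_nonneg hb, ← csInf_add hs.smul_set (hs'.smul_of_nonneg ha)
      ht.smul_set (ht'.smul_of_nonneg hb)]
  refine le_csInf (hs.smul_set.add ht.smul_set) ?_
  rintro _ ⟨_, ⟨x, hx, rfl⟩, _, ⟨y, hy, rfl⟩, rfl⟩
  exact h x hx y hy

section Lipschitz

variable {E : Type*} [NormedAddCommGroup E] [NormedSpace ℝ E] {D : Set E} {f : E → ℝ}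
  {ε m M : ℝ}

lemma ConvexOn.sub_le_div_mul_norm (hf : ConvexOn ℝ D f) (hε : 0 < ε) {x y : E} (hx : x ∈ D)
    (hball : closedBall y ε ⊆ D) (hM : ∀ z ∈ closedBall y ε, f z ≤ M) (hm : m ≤ f x)
    (hmM : m ≤ M) : f y - f x ≤ (M - m) / ε * ‖x - y‖ := by
  obtain rfl | hxy := eq_or_ne x y
  · simp
  replace hxy : 0 < ‖x - y‖ := by rwa [norm_sub_pos_iff]
  set t := ‖x - y‖
  let z := y + (ε / t) • (y - x)
  have hz : z ∈ closedBall y ε := by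
    rw [mem_closedBall, dist_eq_norm, add_sub_cancel_left, norm_smul, norm_sub_rev,
      Real.norm_of_nonneg (by positivity), div_mul_cancel₀ _ hxy.ne']
  have hab : ε / (ε + t) + t / (ε + t) = 1 := by field_simp
  have hyxz : (ε / (ε + t)) • x + (t / (ε + t)) • z = y := by
    have hcoef : t / (ε + t) * (ε / t) = ε / (ε + t) := by field_simp
    simp only [z, smul_add, smul_smul, hcoef]
    linear_combination (norm := module) hab • y
  have hconv := hf.2 hx (hball hz) (by positivity) (by positivity) hab
  rw [hyxz, smul_eq_mul, smul_eq_mul] at hconv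
  calc f y - f x ≤ t / (ε + t) * (f z - f x) := by
        linear_combination hconv + f x * hab
    _ ≤ t / (ε + t) * (M - m) := by gcongr; linarith [hM z hz]
    _ ≤ t / ε * (M - m) := by gcongr; linarith
    _ = (M - m) / ε * t := by ring

theorem ConvexOn.abs_sub_le_div_mul_norm {S : Set E} (hf : ConvexOn ℝ D f) (hε : 0 < ε)
    (hD : ∀ z, infDist z S ≤ ε → z ∈ D) (hM : ∀ z, infDist z S ≤ ε → f z ≤ M)
    (hm : ∀ x ∈ S, m ≤ f x) {x y : E} (hx : x ∈ S) (hy : y ∈ S) :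
    |f x - f y| ≤ (M - m) / ε * ‖x - y‖ := by
  have hball {w : E} (hw : w ∈ S) : closedBall w ε ⊆ {z | infDist z S ≤ ε} := fun z hz =>
    (infDist_le_dist_of_mem hw).trans hz
  have hthick {w : E} (hw : w ∈ S) : infDist w S ≤ ε := by
    rw [infDist_zero_of_mem hw]; exact hε.le
  have hmM : m ≤ M := (hm x hx).trans (hM x (hthick hx))
  rw [abs_sub_le_iff]
  constructor
  · rw [norm_sub_rev]
    exact hf.sub_le_div_mul_norm hε (hD y (hthick hy)) (fun z hz => hD z (hball hx hz))
      (fun z hz => hM z (hball hx hz)) (hm y hy) hmM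
  · exact hf.sub_le_div_mul_norm hε (hD x (hthick hx)) (fun z hz => hD z (hball hy hz))
      (fun z hz => hM z (hball hy hz)) (hm x hx) hmM

end Lipschitz

section PerturbedProgram

variable {E F : Type*} [AddCommGroup E] [Module ℝ E] [AddCommGroup F] [Module ℝ F]
  (X : Set E) (A : E →ₗ[ℝ] F) (b : F) (K : Set F)

def perturbedFeasibleSet (δ : F) : Set E := {x ∈ X | A x - b + δ ∈ K}

noncomputable def perturbedValue (ψ : E → ℝ) (δ : F) : ℝ :=
  sInf (ψ '' perturbedFeasibleSet X A b K δ)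

variable {X A b K}

lemma smul_add_smul_mem_perturbedFeasibleSet (hX : Convex ℝ X) (hK : Convex ℝ K) {δ₁ δ₂ : F}
    {x₁ x₂ : E} (hx₁ : x₁ ∈ perturbedFeasibleSet X A b K δ₁)
    (hx₂ : x₂ ∈ perturbedFeasibleSet X A b K δ₂) {a c : ℝ} (ha : 0 ≤ a) (hc : 0 ≤ c)
    (hac : a + c = 1) :
    a • x₁ + c • x₂ ∈ perturbedFeasibleSet X A b K (a • δ₁ + c • δ₂) := by
  refine ⟨hX hx₁.1 hx₂.1 ha hc hac, ?_⟩
  convert hK hx₁.2 hx₂.2 ha hc hac using 1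
  rw [map_add, map_smul, map_smul]
  linear_combination (norm := module) hac • b

lemma convex_setOf_perturbedFeasibleSet_nonempty (hX : Convex ℝ X) (hK : Convex ℝ K) :
    Convex ℝ {δ | (perturbedFeasibleSet X A b K δ).Nonempty} :=
  fun _ ⟨_, hx₁⟩ _ ⟨_, hx₂⟩ _ _ ha hc hac =>
    ⟨_, smul_add_smul_mem_perturbedFeasibleSet hX hK hx₁ hx₂ ha hc hac⟩

theorem convexOn_perturbedValue {ψ : E → ℝ} (hψ : ConvexOn ℝ X ψ) (hψX : BddBelow (ψ '' X))
    (hK : Convex ℝ K) :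
    ConvexOn ℝ {δ | (perturbedFeasibleSet X A b K δ).Nonempty} (perturbedValue X A b K ψ) := by
  have hbdd (δ : F) : BddBelow (ψ '' perturbedFeasibleSet X A b K δ) :=
    hψX.mono (image_mono fun _ hx => hx.1)
  refine ⟨convex_setOf_perturbedFeasibleSet_nonempty hψ.1 hK,
    fun δ₁ hδ₁ δ₂ hδ₂ a c ha hc hac => ?_⟩
  refine le_mul_csInf_add_mul_csInf (hδ₁.image ψ) (hbdd δ₁) (hδ₂.image ψ) (hbdd δ₂) ha hc ?_
  rintro _ ⟨x₁, hx₁, rfl⟩ _ ⟨x₂, hx₂, rfl⟩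
  have hx := smul_add_smul_mem_perturbedFeasibleSet hψ.1 hK hx₁ hx₂ ha hc hac
  exact (csInf_le (hbdd _) (mem_image_of_mem ψ hx)).trans (hψ.2 hx₁.1 hx₂.1 ha hc hac)

lemma le_perturbedValue {ψ : E → ℝ} {m : ℝ} (hψ : ∀ x ∈ X, m ≤ ψ x) {δ : F}
    (hδ : (perturbedFeasibleSet X A b K δ).Nonempty) : m ≤ perturbedValue X A b K ψ δ :=
  le_csInf (hδ.image ψ) (forall_mem_image.2 fun x hx => hψ x hx.1)

end PerturbedProgram

theorem perturbed_value_function_lipschitz_general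
    {n m : ℕ}
    (ψ : EuclideanSpace ℝ (Fin n) → ℝ)
    (Xbar : Set (EuclideanSpace ℝ (Fin n)))
    (hψconv : ConvexOn ℝ Xbar ψ)
    (mlo M : ℝ) (hψlb : ∀ x ∈ Xbar, mlo ≤ ψ x)
    (K : ConvexCone ℝ (EuclideanSpace ℝ (Fin m)))
    (A : EuclideanSpace ℝ (Fin n) →ₗ[ℝ] EuclideanSpace ℝ (Fin m))
    (b : EuclideanSpace ℝ (Fin m))
    (S : Set (EuclideanSpace ℝ (Fin m)))
    (ε' : ℝ) (hε' : 0 < ε')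
    (hfeas : ∀ δ' : EuclideanSpace ℝ (Fin m), Metric.infDist δ' S ≤ ε' →
      {x ∈ Xbar | A x - b + δ' ∈ K}.Nonempty)
    (hub : ∀ δ' : EuclideanSpace ℝ (Fin m), Metric.infDist δ' S ≤ ε' →
      sInf (ψ '' {x ∈ Xbar | A x - b + δ' ∈ K}) ≤ M) :
    ∀ δ ∈ S, ∀ δ'' ∈ S,
      |sInf (ψ '' {x ∈ Xbar | A x - b + δ ∈ K})
          - sInf (ψ '' {x ∈ Xbar | A x - b + δ'' ∈ K})|
        ≤ ((M - mlo) / ε') * ‖δ - δ''‖ := by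
  intro δ hδ δ'' hδ''
  have hψXbar : BddBelow (ψ '' Xbar) := ⟨mlo, forall_mem_image.2 hψlb⟩
  exact (convexOn_perturbedValue hψconv hψXbar K.convex).abs_sub_le_div_mul_norm hε' hfeas hub
    (fun δ hδ => le_perturbedValue hψlb (hfeas δ ((infDist_zero_of_mem hδ).trans_le hε'.le)))
    hδ hδ''

/-- Lipschitz continuity of the perturbed optimal value of a conic
convex program.  If the perturbed program `g(δ) = inf {ψ(x) : x ∈ X̄, Ax - b + δ ∈ K}`
is feasible and its value is at most `M` for every perturbation `δ'` within
distance `ε'` of the convex set `S`, and `ψ ≥ m` on `X̄`, then `g` is Lipschitz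
on `S` with constant `(M - m)/ε'`. -/
theorem perturbed_value_function_lipschitz
    {n m : ℕ}
    (ψ : EuclideanSpace ℝ (Fin n) → ℝ)
    (Xbar : Set (EuclideanSpace ℝ (Fin n)))
    (hψconv : ConvexOn ℝ Xbar ψ)
    (mlo M : ℝ) (hψlb : ∀ x ∈ Xbar, mlo ≤ ψ x)
    (K : ConvexCone ℝ (EuclideanSpace ℝ (Fin m)))
    (A : EuclideanSpace ℝ (Fin n) →ₗ[ℝ] EuclideanSpace ℝ (Fin m))
    (b : EuclideanSpace ℝ (Fin m))
    (S : Set (EuclideanSpace ℝ (Fin m))) (hS : Convex ℝ S)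
    (ε' : ℝ) (hε' : 0 < ε')
    (hfeas : ∀ δ' : EuclideanSpace ℝ (Fin m), Metric.infDist δ' S ≤ ε' →
      {x ∈ Xbar | A x - b + δ' ∈ K}.Nonempty)
    (hub : ∀ δ' : EuclideanSpace ℝ (Fin m), Metric.infDist δ' S ≤ ε' →
      sInf (ψ '' {x ∈ Xbar | A x - b + δ' ∈ K}) ≤ M) :
    ∀ δ ∈ S, ∀ δ'' ∈ S,
      |sInf (ψ '' {x ∈ Xbar | A x - b + δ ∈ K})
          - sInf (ψ '' {x ∈ Xbar | A x - b + δ'' ∈ K})|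
        ≤ ((M - mlo) / ε') * ‖δ - δ''‖ :=
  perturbed_value_function_lipschitz_general ψ Xbar hψconv mlo M hψlb K A b S ε' hε' hfeas hub
end

section
/- Let (Ω, ℱ, P) be a probability space with a filtration ℱ₀ ⊆ ℱ₁ ⊆ … ⊆ ℱ_N ⊆ ℱ, and let ζ₁,…,ζ_N be integrable real random variables such that for each t ∈ {1,…,N}: ζ_t is ℱ_t-measurable, E[ζ_t | ℱ_{t−1}] = 0 almost surely, and E[ exp(ζ_t² / σ_t²) | ℱ_{t−1} ] ≤ exp(1) almost surely, where σ₁,…,σ_N > 0 are deterministic constants. Then for every λ ≥ 0, P( ∑_{t=1}^{N} ζ_t > λ·√(∑_{t=1}^{N} σ_t²) ) ≤ exp(−λ²/3). -/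
/-!
For `0 ≤ θ ≤ 1` the tangent line at `x = e` of the concave map `x ↦ x ^ θ` gives
`exp (θ Z) ≤ (1 - θ) e^θ + θ e^(θ-1) exp Z`, so `E[exp Z | 𝒢] ≤ e` implies `E[exp (θ Z) | 𝒢] ≤ e^θ`.
Applied to `Z = ζ² / σ²`, together with the elementary inequality `exp y ≤ y + exp (9 y² / 16)`
and the vanishing conditional mean when `γ² σ² ≤ 16 / 9`, or with Young's inequality
`γ ζ ≤ 3 γ² σ² / 8 + 2 ζ² / (3 σ²)` when `γ² σ² ≥ 16 / 9`, the light-tail condition yields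
`E[exp (γ ζ_t) | 𝒢_{t-1}] ≤ exp (3 γ² σ_t² / 4)`. Multiplying these bounds along the filtration
gives `E[exp (γ ∑ ζ_t)] ≤ exp (3 γ² ∑ σ_t² / 4)`, and Markov's inequality with
`γ = 2 λ / (3 √(∑ σ_t²))` yields the tail bound.
-/

namespace Real

theorem exp_le_quadratic_of_nonpos {y : ℝ} (hy : y ≤ 0) : exp y ≤ 1 + y + y ^ 2 / 2 := by
  -- with `x = -y ≥ 0`: `(1 + x + x²/2 + x³/6) (1 - x + x²/2) = 1 + x³/6 + x⁴/12 + x⁵/12 ≥ 1`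
  have hcubic : 1 + -y + (-y) ^ 2 / 2 + (-y) ^ 3 / 6 ≤ exp (-y) := by
    simpa [Finset.sum_range_succ, Nat.factorial] using sum_le_exp_of_nonneg (neg_nonneg.2 hy) 4
  have hinv : exp y * exp (-y) = 1 := by rw [← exp_add, add_neg_cancel, exp_zero]
  have hq : 0 < 1 + y + y ^ 2 / 2 := by nlinarith [sq_nonneg (y + 1)]
  nlinarith [exp_pos y, mul_le_mul_of_nonneg_left hcubic hq.le, pow_two_nonneg y,
    mul_nonneg (pow_two_nonneg y) (neg_nonneg.2 hy)]

theorem exp_le_add_exp_sq_of_nonpos {y : ℝ} (hy : y ≤ 0) : exp y ≤ y + exp (9 * y ^ 2 / 16) := by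
  nlinarith [exp_le_quadratic_of_nonpos hy, add_one_le_exp (9 * y ^ 2 / 16), sq_nonneg y]

theorem exp_le_add_exp_sq_of_mem_Icc_zero_one {y : ℝ} (h₀ : 0 ≤ y) (h₁ : y ≤ 1) :
    exp y ≤ y + exp (9 * y ^ 2 / 16) := by
  have upper := exp_bound' h₀ h₁ (n := 7) (by norm_num)
  have lower := sum_le_exp_of_nonneg (x := 9 * y ^ 2 / 16) (by positivity) 4
  simp only [Finset.sum_range_succ, Finset.sum_range_zero, Nat.factorial] at upper lower
  norm_num at upper lower
  -- the difference of the two Taylor bounds, divided by `y ^ 2`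
  have gap : 0 ≤ 1 / 16 - y / 6 + 179 / 1536 * y ^ 2 - y ^ 3 / 120
      + (729 / 24576 - 1 / 720) * y ^ 4 - y ^ 5 / 4410 := by
    nlinarith [sq_nonneg (y - 2 / 3), mul_nonneg h₀ h₀, mul_nonneg (mul_nonneg h₀ h₀) h₀,
      mul_nonneg (sub_nonneg.2 h₁) h₀, mul_nonneg (mul_nonneg (sub_nonneg.2 h₁) h₀) h₀]
  nlinarith [mul_nonneg (sq_nonneg y) gap]

theorem exp_le_add_exp_sq_of_mem_Icc_one {y : ℝ} (h₁ : 1 ≤ y) (h₂ : y ≤ 16 / 9) :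
    exp y ≤ y + exp (9 * y ^ 2 / 16) := by
  obtain ⟨u, rfl⟩ : ∃ u, y = 1 + u := ⟨y - 1, by ring⟩
  have hu₀ : 0 ≤ u := by linarith
  have hu₁ : u ≤ 7 / 9 := by linarith
  have upper := exp_bound' hu₀ (by linarith) (n := 7) (by norm_num)
  have lower := sum_le_exp_of_nonneg (x := 9 * (1 + u) ^ 2 / 16) (by positivity) 5
  simp only [Finset.sum_range_succ, Finset.sum_range_zero, Nat.factorial] at upper lower
  norm_num at upper lower
  have hexp : exp (1 + u) ≤ 2.7182818286 * exp u := by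
    rw [exp_add]
    exact mul_le_mul_of_nonneg_right exp_one_lt_d9.le (exp_pos u).le
  have poly : 2.7182818286 * (1 + u + u ^ 2 / 2 + u ^ 3 / 6 + u ^ 4 / 24 + u ^ 5 / 120
      + u ^ 6 / 720 + u ^ 7 * 8 / 35280) ≤ (1 + u) + (1 + 9 * (1 + u) ^ 2 / 16
      + (9 * (1 + u) ^ 2 / 16) ^ 2 / 2 + (9 * (1 + u) ^ 2 / 16) ^ 3 / 6
      + (9 * (1 + u) ^ 2 / 16) ^ 4 / 24) := by
    nlinarith [sq_nonneg u, mul_nonneg hu₀ hu₀, sq_nonneg (u - 1 / 2),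
      mul_nonneg (mul_nonneg hu₀ hu₀) hu₀, mul_nonneg (sub_nonneg.2 hu₁) hu₀,
      mul_nonneg (mul_nonneg (sub_nonneg.2 hu₁) hu₀) hu₀, pow_nonneg hu₀ 4,
      pow_nonneg hu₀ 5, pow_nonneg hu₀ 6, pow_nonneg hu₀ 7,
      mul_nonneg (sub_nonneg.2 hu₁) (pow_nonneg hu₀ 3)]
  linarith

theorem exp_le_add_exp_sq (y : ℝ) : exp y ≤ y + exp (9 * y ^ 2 / 16) := by
  rcases le_total y 0 with hy | hy
  · exact exp_le_add_exp_sq_of_nonpos hy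
  rcases le_total y 1 with hy₁ | hy₁
  · exact exp_le_add_exp_sq_of_mem_Icc_zero_one hy hy₁
  rcases le_total y (16 / 9) with hy₂ | hy₂
  · exact exp_le_add_exp_sq_of_mem_Icc_one hy₁ hy₂
  · have : exp y ≤ exp (9 * y ^ 2 / 16) := exp_le_exp.2 (by nlinarith)
    linarith

theorem exp_mul_le_of_mem_Icc {θ : ℝ} (hθ₀ : 0 ≤ θ) (hθ₁ : θ ≤ 1) (u : ℝ) :
    exp (θ * u) ≤ (1 - θ) * exp θ + θ * exp (θ - 1) * exp u := by
  have amgm := geom_mean_le_arith_mean2_weighted hθ₀ (sub_nonneg.2 hθ₁)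
    (exp_pos (u - 1)).le zero_le_one (add_sub_cancel θ 1)
  rw [one_rpow, mul_one, mul_one, ← exp_mul] at amgm
  calc exp (θ * u) = exp ((u - 1) * θ) * exp θ := by rw [← exp_add]; ring_nf
    _ ≤ (θ * exp (u - 1) + (1 - θ)) * exp θ := by gcongr
    _ = (1 - θ) * exp θ + θ * exp (θ - 1) * exp u := by
      rw [exp_sub, exp_sub]
      ring

end Real

open MeasureTheory ProbabilityTheory Filter Topology Real

section MonotoneConvergence

variable {α : Type*} {mα : MeasurableSpace α} {μ : Measure α}

theorem integrable_and_integral_le_of_tendsto_of_monotone {f : ℕ → α → ℝ} {F : α → ℝ} {B : ℝ}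
    (hf : ∀ n, Integrable (f n) μ) (hf₀ : ∀ n, 0 ≤ f n)
    (h_mono : ∀ x, Monotone fun n => f n x)
    (h_tendsto : ∀ x, Tendsto (fun n => f n x) atTop (𝓝 (F x)))
    (h_bound : ∀ n, ∫ x, f n x ∂μ ≤ B) :
    Integrable F μ ∧ ∫ x, F x ∂μ ≤ B := by
  have hF₀ : 0 ≤ F := fun x => ge_of_tendsto' (h_tendsto x) fun n => hf₀ n x
  have hlint : Tendsto (fun n => ∫⁻ x, ENNReal.ofReal (f n x) ∂μ) atTop
      (𝓝 (∫⁻ x, ENNReal.ofReal (F x) ∂μ)) :=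
    lintegral_tendsto_of_tendsto_of_monotone (fun n => (hf n).aemeasurable.ennreal_ofReal)
      (Eventually.of_forall fun x _ _ hnm => ENNReal.ofReal_le_ofReal (h_mono x hnm))
      (Eventually.of_forall fun x => (ENNReal.continuous_ofReal.tendsto _).comp (h_tendsto x))
  have hF : Integrable F μ := by
    refine ⟨aestronglyMeasurable_of_tendsto_ae atTop (fun n => (hf n).1)
      (Eventually.of_forall h_tendsto),
      (hasFiniteIntegral_iff_ofReal (Eventually.of_forall hF₀)).2 ?_⟩
    refine lt_of_le_of_lt (b := ENNReal.ofReal B) (le_of_tendsto' hlint fun n => ?_)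
      ENNReal.ofReal_lt_top
    rw [← ofReal_integral_eq_lintegral_ofReal (hf n) (Eventually.of_forall (hf₀ n))]
    exact ENNReal.ofReal_le_ofReal (h_bound n)
  exact ⟨hF, le_of_tendsto' (integral_tendsto_of_tendsto_of_monotone hf hF
    (Eventually.of_forall h_mono) (Eventually.of_forall h_tendsto)) h_bound⟩

end MonotoneConvergence

section CondExp

variable {Ω : Type*} {m m0 : MeasurableSpace Ω} {μ : Measure Ω} [IsFiniteMeasure μ]

theorem integrable_and_condExp_le_of_le_affine (hm : m ≤ m0)
    {g X E : Ω → ℝ} {a b c₁ c₂ : ℝ} (hc₂ : 0 ≤ c₂)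
    (hX : Integrable X μ) (hE : Integrable E μ)
    (hX_condExp : μ[X|m] =ᵐ[μ] 0) (hE_condExp : μ[E|m] ≤ᵐ[μ] fun _ => b)
    (hg_meas : AEStronglyMeasurable g μ) (hg₀ : 0 ≤ g)
    (hg_le : ∀ ω, g ω ≤ c₁ + a * X ω + c₂ * E ω) :
    Integrable g μ ∧ μ[g|m] ≤ᵐ[μ] fun _ => c₁ + c₂ * b := by
  have hc : Integrable (fun _ => c₁ : Ω → ℝ) μ := integrable_const c₁
  have hB : Integrable ((fun _ => c₁) + a • X + c₂ • E) μ := (hc.add (hX.smul a)).add (hE.smul c₂)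
  have hg_le' : g ≤ (fun _ => c₁) + a • X + c₂ • E := fun ω => hg_le ω
  have hg : Integrable g μ :=
    hB.mono' hg_meas (Eventually.of_forall fun ω => by
      rw [Real.norm_eq_abs, abs_of_nonneg (hg₀ ω)]; exact hg_le' ω)
  refine ⟨hg, ?_⟩
  filter_upwards [condExp_mono hg hB (Eventually.of_forall hg_le'),
    condExp_add (hc.add (hX.smul a)) (hE.smul c₂) m, condExp_add hc (hX.smul a) m,
    condExp_smul a X m, condExp_smul c₂ E m, hX_condExp, hE_condExp]
    with ω hgB hsum₁ hsum₂ hsmul₁ hsmul₂ hXω hEω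
  rw [hsum₁, Pi.add_apply, hsum₂] at hgB
  simp only [Pi.add_apply, hsmul₁, hsmul₂, condExp_const hm, Pi.smul_apply, hXω,
    Pi.zero_apply, smul_eq_mul] at hgB
  nlinarith

theorem integral_mul_le_of_condExp_le (hm : m ≤ m0) {f g : Ω → ℝ} {C : ℝ}
    (hf_meas : StronglyMeasurable[m] f) (hf₀ : 0 ≤ f) (hf : Integrable f μ)
    (hg : Integrable g μ) (hfg : Integrable (f * g) μ) (hg_condExp : μ[g|m] ≤ᵐ[μ] fun _ => C) :
    ∫ ω, f ω * g ω ∂μ ≤ C * ∫ ω, f ω ∂μ := by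
  have pull := condExp_mul_of_stronglyMeasurable_left hf_meas hfg hg
  calc ∫ ω, f ω * g ω ∂μ = ∫ ω, (f * μ[g|m]) ω ∂μ :=
        (integral_condExp hm).symm.trans (integral_congr_ae pull)
    _ ≤ ∫ ω, C * f ω ∂μ := by
        refine integral_mono_ae (integrable_condExp.congr pull) (hf.const_mul C) ?_
        filter_upwards [hg_condExp] with ω hω
        simpa [mul_comm C] using mul_le_mul_of_nonneg_left hω (hf₀ ω)
    _ = C * ∫ ω, f ω ∂μ := integral_const_mul C f

theorem integrable_mul_and_integral_mul_le_of_condExp_le (hm : m ≤ m0)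
    {f g : Ω → ℝ} {C : ℝ} (hf_meas : StronglyMeasurable[m] f) (hf₀ : 0 ≤ f) (hf : Integrable f μ)
    (hg₀ : 0 ≤ g) (hg : Integrable g μ) (hg_condExp : μ[g|m] ≤ᵐ[μ] fun _ => C) :
    Integrable (f * g) μ ∧ ∫ ω, f ω * g ω ∂μ ≤ C * ∫ ω, f ω ∂μ := by
  set gₙ : ℕ → Ω → ℝ := fun n ω => min (g ω) n
  have hgₙ_meas n : AEStronglyMeasurable (gₙ n) μ :=
    hg.aestronglyMeasurable.inf aestronglyMeasurable_const
  have hgₙ n : Integrable (gₙ n) μ :=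
    hg.mono (hgₙ_meas n) (Eventually.of_forall fun ω => by
      simp only [Real.norm_eq_abs, gₙ]
      rw [abs_of_nonneg (le_min (hg₀ ω) n.cast_nonneg), abs_of_nonneg (hg₀ ω)]
      exact min_le_left _ _)
  have hfgₙ n : Integrable (f * gₙ n) μ :=
    hf.mul_bdd (hgₙ_meas n) (Eventually.of_forall fun ω => by
      simp only [Real.norm_eq_abs, gₙ]
      rw [abs_of_nonneg (le_min (hg₀ ω) n.cast_nonneg)]
      exact min_le_right _ _)
  refine integrable_and_integral_le_of_tendsto_of_monotone hfgₙ
    (fun n ω => mul_nonneg (hf₀ ω) (le_min (hg₀ ω) n.cast_nonneg))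
    (fun ω n k hnk => mul_le_mul_of_nonneg_left (min_le_min le_rfl (Nat.cast_le.2 hnk)) (hf₀ ω))
    (fun ω => tendsto_atTop_of_eventually_const (i₀ := ⌈g ω⌉₊) fun n hn => ?_)
    (fun n => integral_mul_le_of_condExp_le hm hf_meas hf₀ hf (hgₙ n) (hfgₙ n) ?_)
  · simp only [Pi.mul_apply, gₙ, min_eq_left ((Nat.le_ceil _).trans (Nat.cast_le.2 hn))]
  · filter_upwards [condExp_mono (hgₙ n) hg (Eventually.of_forall fun ω => min_le_left _ _),
      hg_condExp] with ω h₁ h₂ using h₁.trans h₂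

theorem integrable_and_condExp_le_of_le_mul_add_mul_exp_mul (hm : m ≤ m0)
    {g X Z : Ω → ℝ} {a c θ : ℝ} (hc : 0 ≤ c) (hθ₀ : 0 ≤ θ) (hθ₁ : θ ≤ 1)
    (hX : Integrable X μ) (hX_condExp : μ[X|m] =ᵐ[μ] 0)
    (hZ : Integrable (fun ω => exp (Z ω)) μ)
    (hZ_condExp : μ[fun ω => exp (Z ω)|m] ≤ᵐ[μ] fun _ => exp 1)
    (hg_meas : AEStronglyMeasurable g μ) (hg₀ : 0 ≤ g)
    (hg_le : ∀ ω, g ω ≤ a * X ω + c * exp (θ * Z ω)) :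
    Integrable g μ ∧ μ[g|m] ≤ᵐ[μ] fun _ => c * exp θ := by
  have hg_le' ω : g ω ≤ c * ((1 - θ) * exp θ) + a * X ω + c * (θ * exp (θ - 1)) * exp (Z ω) := by
    have := mul_le_mul_of_nonneg_left (exp_mul_le_of_mem_Icc hθ₀ hθ₁ (Z ω)) hc
    linarith [hg_le ω]
  obtain ⟨hg, hg_condExp⟩ := integrable_and_condExp_le_of_le_affine hm
    (mul_nonneg hc (by positivity)) hX hZ hX_condExp hZ_condExp hg_meas hg₀ hg_le'
  refine ⟨hg, hg_condExp.trans_eq (Eventually.of_forall fun _ => ?_)⟩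
  rw [exp_sub]
  field_simp
  ring

variable {X : Ω → ℝ} {s : ℝ}

theorem integrable_and_condExp_exp_mul_le_of_sq_mul_sq_le (hm : m ≤ m0) (hs : s ≠ 0)
    (hX : Integrable X μ) (hX_condExp : μ[X|m] =ᵐ[μ] 0)
    (hE : Integrable (fun ω => exp (X ω ^ 2 / s ^ 2)) μ)
    (hE_condExp : μ[fun ω => exp (X ω ^ 2 / s ^ 2)|m] ≤ᵐ[μ] fun _ => exp 1)
    {γ : ℝ} (hγ : γ ^ 2 * s ^ 2 ≤ 16 / 9) :
    Integrable (fun ω => exp (γ * X ω)) μ ∧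
      μ[fun ω => exp (γ * X ω)|m] ≤ᵐ[μ] fun _ => exp (9 / 16 * γ ^ 2 * s ^ 2) := by
  have hθ₁ : 9 / 16 * γ ^ 2 * s ^ 2 ≤ 1 := by linarith
  simpa using integrable_and_condExp_le_of_le_mul_add_mul_exp_mul hm zero_le_one (by positivity)
    hθ₁ hX hX_condExp hE hE_condExp
    (continuous_exp.comp_aestronglyMeasurable (hX.aestronglyMeasurable.const_mul γ))
    (fun ω => (exp_pos _).le) (a := γ) fun ω => by
      convert exp_le_add_exp_sq (γ * X ω) using 3
      field_simp

theorem integrable_and_condExp_exp_mul_le_exp_add_two_div_three (hm : m ≤ m0) (hs : s ≠ 0)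
    (hX : Integrable X μ) (hX_condExp : μ[X|m] =ᵐ[μ] 0)
    (hE : Integrable (fun ω => exp (X ω ^ 2 / s ^ 2)) μ)
    (hE_condExp : μ[fun ω => exp (X ω ^ 2 / s ^ 2)|m] ≤ᵐ[μ] fun _ => exp 1) (γ : ℝ) :
    Integrable (fun ω => exp (γ * X ω)) μ ∧
      μ[fun ω => exp (γ * X ω)|m] ≤ᵐ[μ] fun _ => exp (3 / 8 * γ ^ 2 * s ^ 2 + 2 / 3) := by
  have hg_le ω : exp (γ * X ω)
      ≤ 0 * X ω + exp (3 / 8 * γ ^ 2 * s ^ 2) * exp (2 / 3 * (X ω ^ 2 / s ^ 2)) := by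
    rw [zero_mul, zero_add, ← exp_add, exp_le_exp, ← sub_nonneg]
    have young : 3 / 8 * γ ^ 2 * s ^ 2 + 2 / 3 * (X ω ^ 2 / s ^ 2) - γ * X ω
        = (3 * γ * s ^ 2 - 4 * X ω) ^ 2 / (24 * s ^ 2) := by field_simp; ring
    rw [young]
    positivity
  obtain ⟨hg, hg_condExp⟩ := integrable_and_condExp_le_of_le_mul_add_mul_exp_mul hm
    (exp_pos _).le (by norm_num) (by norm_num) hX hX_condExp hE hE_condExp
    (continuous_exp.comp_aestronglyMeasurable (hX.aestronglyMeasurable.const_mul γ))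
    (fun ω => (exp_pos _).le) hg_le
  exact ⟨hg, hg_condExp.trans_eq (Eventually.of_forall fun _ => (exp_add _ _).symm)⟩

theorem integrable_and_condExp_exp_mul_le (hm : m ≤ m0) (hs : s ≠ 0)
    (hX : Integrable X μ) (hX_condExp : μ[X|m] =ᵐ[μ] 0)
    (hE : Integrable (fun ω => exp (X ω ^ 2 / s ^ 2)) μ)
    (hE_condExp : μ[fun ω => exp (X ω ^ 2 / s ^ 2)|m] ≤ᵐ[μ] fun _ => exp 1) (γ : ℝ) :
    Integrable (fun ω => exp (γ * X ω)) μ ∧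
      μ[fun ω => exp (γ * X ω)|m] ≤ᵐ[μ] fun _ => exp (3 / 4 * γ ^ 2 * s ^ 2) := by
  rcases le_total (γ ^ 2 * s ^ 2) (16 / 9) with hγ | hγ
  · obtain ⟨hg, hg_condExp⟩ := integrable_and_condExp_exp_mul_le_of_sq_mul_sq_le hm hs hX
      hX_condExp hE hE_condExp hγ
    exact ⟨hg, hg_condExp.trans (Eventually.of_forall fun _ =>
      exp_le_exp.2 (by nlinarith [sq_nonneg (γ * s)]))⟩
  · obtain ⟨hg, hg_condExp⟩ := integrable_and_condExp_exp_mul_le_exp_add_two_div_three hm hs hX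
      hX_condExp hE hE_condExp γ
    exact ⟨hg, hg_condExp.trans (Eventually.of_forall fun _ => exp_le_exp.2 (by linarith))⟩

end CondExp

section Martingale

variable {Ω : Type*} {m0 : MeasurableSpace Ω} {μ : Measure Ω}

theorem integrable_and_integral_exp_sum_le [IsProbabilityMeasure μ] {𝒢 : ℕ → MeasurableSpace Ω}
    (h𝒢mono : Monotone 𝒢) (h𝒢le : ∀ t, 𝒢 t ≤ m0) {Y : ℕ → Ω → ℝ} {c : ℕ → ℝ} (N : ℕ)
    (hY_meas : ∀ t ∈ Finset.Icc 1 N, StronglyMeasurable[𝒢 t] (Y t))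
    (hY : ∀ t ∈ Finset.Icc 1 N, Integrable (fun ω => exp (Y t ω)) μ)
    (hY_condExp : ∀ t ∈ Finset.Icc 1 N,
      μ[fun ω => exp (Y t ω)|𝒢 (t - 1)] ≤ᵐ[μ] fun _ => exp (c t)) :
    Integrable (fun ω => exp (∑ t ∈ Finset.Icc 1 N, Y t ω)) μ ∧
      ∫ ω, exp (∑ t ∈ Finset.Icc 1 N, Y t ω) ∂μ ≤ exp (∑ t ∈ Finset.Icc 1 N, c t) := by
  induction N with
  | zero => simp
  | succ n ih =>
    have hsub : Finset.Icc 1 n ⊆ Finset.Icc 1 (n + 1) := Finset.Icc_subset_Icc_right n.le_succ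
    have hlast : n + 1 ∈ Finset.Icc 1 (n + 1) := Finset.mem_Icc.2 ⟨n.succ_pos, le_rfl⟩
    obtain ⟨hS, hS_le⟩ := ih (fun t ht => hY_meas t (hsub ht)) (fun t ht => hY t (hsub ht))
      (fun t ht => hY_condExp t (hsub ht))
    have hS_meas : StronglyMeasurable[𝒢 n] fun ω => exp (∑ t ∈ Finset.Icc 1 n, Y t ω) :=
      continuous_exp.comp_stronglyMeasurable (Finset.stronglyMeasurable_fun_sum _ fun t ht =>
        (hY_meas t (hsub ht)).mono (h𝒢mono (Finset.mem_Icc.1 ht).2))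
    obtain ⟨hprod, hprod_le⟩ := integrable_mul_and_integral_mul_le_of_condExp_le (h𝒢le n) hS_meas
      (fun _ => (exp_pos _).le) hS (fun _ => (exp_pos _).le) (hY _ hlast) (hY_condExp _ hlast)
    simp only [Finset.sum_Icc_succ_top (Nat.le_add_left 1 n), exp_add]
    refine ⟨hprod, hprod_le.trans ?_⟩
    rw [mul_comm]
    gcongr

theorem measure_lt_le_of_integral_exp_mul_le [IsFiniteMeasure μ] {S : Ω → ℝ} {γ a B : ℝ}
    (hγ : 0 ≤ γ) (hS : Integrable (fun ω => exp (γ * S ω)) μ)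
    (hB : ∫ ω, exp (γ * S ω) ∂μ ≤ B) :
    μ {ω | a < S ω} ≤ ENNReal.ofReal (exp (-γ * a) * B) :=
  calc μ {ω | a < S ω} ≤ μ {ω | a ≤ S ω} := measure_mono fun ω (hω : a < S ω) => hω.le
    _ = ENNReal.ofReal (μ.real {ω | a ≤ S ω}) := (ofReal_measureReal).symm
    _ ≤ ENNReal.ofReal (exp (-γ * a) * B) := ENNReal.ofReal_le_ofReal <|
        (measure_ge_le_exp_mul_mgf a hγ hS).trans (by gcongr; exact hB)

end Martingale

/-- Sub-Gaussian martingale-difference tail bound.  If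
`ζ₁, …, ζ_N` are adapted to the filtration `𝒢`, have zero conditional mean, and
satisfy the conditional light-tail bound
`E[exp(ζ_t²/σ_t²) | 𝒢_{t-1}] ≤ exp 1` a.s., then for every `λ ≥ 0`,
`P(∑ ζ_t > λ·√(∑ σ_t²)) ≤ exp(-λ²/3)`. -/
theorem martingale_light_tail_bound
    {Ω : Type*} {m0 : MeasurableSpace Ω} (μ : Measure Ω) [IsProbabilityMeasure μ]
    (N : ℕ) (𝒢 : ℕ → MeasurableSpace Ω)
    (h𝒢mono : Monotone 𝒢) (h𝒢le : ∀ t, 𝒢 t ≤ m0)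
    (ζ : ℕ → Ω → ℝ) (σ : ℕ → ℝ) (hσ : ∀ t ∈ Finset.Icc 1 N, 0 < σ t)
    (hint : ∀ t ∈ Finset.Icc 1 N, Integrable (ζ t) μ)
    (hadapted : ∀ t ∈ Finset.Icc 1 N, StronglyMeasurable[𝒢 t] (ζ t))
    (hcondzero : ∀ t ∈ Finset.Icc 1 N, μ[ζ t | 𝒢 (t - 1)] =ᵐ[μ] 0)
    (hexpint : ∀ t ∈ Finset.Icc 1 N,
      Integrable (fun ω => Real.exp ((ζ t ω) ^ 2 / (σ t) ^ 2)) μ)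
    (hcondexp : ∀ t ∈ Finset.Icc 1 N,
      μ[(fun ω => Real.exp ((ζ t ω) ^ 2 / (σ t) ^ 2)) | 𝒢 (t - 1)]
        ≤ᵐ[μ] fun _ => Real.exp 1) :
    ∀ lam : ℝ, 0 ≤ lam →
      μ {ω | lam * Real.sqrt (∑ t ∈ Finset.Icc 1 N, (σ t) ^ 2)
          < ∑ t ∈ Finset.Icc 1 N, ζ t ω}
        ≤ ENNReal.ofReal (Real.exp (-lam ^ 2 / 3)) := by
  intro lam hlam
  rcases N.eq_zero_or_pos with rfl | hN
  · simp
  set V := ∑ t ∈ Finset.Icc 1 N, σ t ^ 2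
  have hV : 0 < V := Finset.sum_pos (fun t ht => pow_pos (hσ t ht) 2)
    ⟨1, Finset.mem_Icc.2 ⟨le_rfl, hN⟩⟩
  set γ := 2 * lam / (3 * √V)
  have hmgf t (ht : t ∈ Finset.Icc 1 N) := integrable_and_condExp_exp_mul_le (h𝒢le _)
    (hσ t ht).ne' (hint t ht) (hcondzero t ht) (hexpint t ht) (hcondexp t ht) γ
  obtain ⟨hS, hS_le⟩ := integrable_and_integral_exp_sum_le h𝒢mono h𝒢le N
    (Y := fun t ω => γ * ζ t ω) (c := fun t => 3 / 4 * γ ^ 2 * σ t ^ 2)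
    (fun t ht => (hadapted t ht).const_mul γ) (fun t ht => (hmgf t ht).1)
    (fun t ht => (hmgf t ht).2)
  simp only [← Finset.mul_sum] at hS hS_le
  refine (measure_lt_le_of_integral_exp_mul_le (by positivity) hS hS_le).trans_eq ?_
  have hexponent : -γ * (lam * √V) + 3 / 4 * γ ^ 2 * V = -lam ^ 2 / 3 := by
    have hsqrt : 0 < √V := sqrt_pos.2 hV
    have hV' : √V ^ 2 = V := sq_sqrt hV.le
    simp only [γ]
    field_simp
    linear_combination -4 * lam ^ 2 * hV'
  rw [← exp_add, hexponent]
end
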